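/- arXiv:2604.02989 — 6 statements merged into one kernel-verified Lean document; each statement's English description precedes it below -/
import Mathlib

section
/- Let m ≥ 1 and let D = Σ_{t=1}^{m} T(m,t) (the total number of even set partitions of {1,…,2m}). Then, in the polynomial ring ℂ[δ], det Γ²_{2m} = δ^{D} · ∏_{k=1}^{m−1} (δ − k)^{D − Σ_{t=1}^{k} T(m,t)}. -/
/- Set partitions of a finite set are modelled as equivalence relations, i.e. `Setoid`.
   `nBlocks` is the number of blocks (equivalence classes), `p ⊔ q` is the join,
   `IsEvenPartition` says every block has even cardinality, `T m t` counts even set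
   partitions of a `2*m`-element set into exactly `t` blocks, and `Gram2 m` is the Gram
   matrix of the spine standard module of the 2-tonal partition algebra, over `ℂ[δ]`
   (with `δ = Polynomial.X`). -/

open scoped Classical

noncomputable section

def nBlocks {X : Type*} (s : Setoid X) : ℕ := Nat.card (Quotient s)

def IsEvenPartition {X : Type*} (s : Setoid X) : Prop :=
  ∀ x : X, Even (Nat.card {y : X // s.r x y})

def T (m t : ℕ) : ℕ :=
  Nat.card {s : Setoid (Fin (2 * m)) // IsEvenPartition s ∧ nBlocks s = t}

instance {X : Type*} [Finite X] : Finite (Setoid X) :=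
  Finite.of_injective (fun s : Setoid X => (s.r : X → X → Prop)) fun s t h => by
    cases s; cases t; cases h; rfl

noncomputable instance (m : ℕ) : Fintype {s : Setoid (Fin (2 * m)) // IsEvenPartition s} :=
  Fintype.ofFinite _

def Gram2 (m : ℕ) :
    Matrix {s : Setoid (Fin (2 * m)) // IsEvenPartition s}
      {s : Setoid (Fin (2 * m)) // IsEvenPartition s} (Polynomial ℂ) :=
  Matrix.of fun p q => (Polynomial.X : Polynomial ℂ) ^ nBlocks (p.1 ⊔ q.1)

/-
Write `(δ)_b = δ(δ-1)⋯(δ-b+1)`. Sorting the maps from a finite set to an `N`-element set by their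
kernels gives `∑_σ (N)_{b(σ)} = N ^ |X|`; since the partitions coarser than `s` are the partitions
of the set of blocks of `s`, this yields `δ ^ b(s) = ∑_{r ≥ s} (δ)_{b(r)}`. Coarsenings of even
partitions are even, so `Γ = ζ · diag((δ)_{b(r)}) · ζᵀ` with `ζ` the zeta matrix of refinement on
even partitions, which is unitriangular. Hence `det Γ = ∏_r (δ)_{b(r)}`, where the factor `δ - k`
occurs once for each even partition with more than `k` blocks, and an even partition of a
`2m`-element set has at most `m` blocks.
-/

open Polynomial Finset

section SetPartition

variable {α : Type*}

def kerEqEquivEmbedding {β : Type*} (σ : Setoid α) :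
    {f : α → β // Setoid.ker f = σ} ≃ (Quotient σ ↪ β) where
  toFun f := ⟨Quotient.lift f.1 f.2.ge, (Setoid.lift_injective_iff_ker_eq_of_le f.2.ge).2 f.2⟩
  invFun g := ⟨g ∘ Quotient.mk σ, Setoid.ker_eq_lift_of_injective (g ∘ Quotient.mk σ)
    (fun _ _ h => congrArg g (Quotient.sound h)) (by convert g.injective; ext ⟨x⟩; rfl)⟩
  left_inv _ := rfl
  right_inv g := by ext ⟨x⟩; rfl

theorem natCard_fun_eq_sum_natCard_embedding [Finite α] [Fintype (Setoid α)] (β : Type*)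
    [Finite β] :
    Nat.card (α → β) = ∑ σ : Setoid α, Nat.card (Quotient σ ↪ β) := by
  rw [← Nat.card_congr (Equiv.sigmaFiberEquiv (Setoid.ker : (α → β) → Setoid α)),
    Nat.card_sigma]
  exact Fintype.sum_congr _ _ fun σ => Nat.card_congr (kerEqEquivEmbedding σ)

theorem sum_descPochhammer_nBlocks {R : Type*} [CommRing R] [IsDomain R] [CharZero R]
    [Finite α] [Fintype (Setoid α)] :
    ∑ σ : Setoid α, descPochhammer R (nBlocks σ) = X ^ Nat.card α := by
  refine eq_of_infinite_eval_eq _ _ (Set.infinite_of_injective_forall_mem Nat.cast_injective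
    fun N => ?_)
  have := Fintype.ofFinite α
  have hcard : ∀ σ : Setoid α, Nat.card (Quotient σ ↪ Fin N) = N.descFactorial (nBlocks σ) := by
    intro σ
    have := Fintype.ofFinite (Quotient σ)
    rw [Nat.card_eq_fintype_card, Fintype.card_embedding_eq, Fintype.card_fin, nBlocks,
      Nat.card_eq_fintype_card]
  have hfun := natCard_fun_eq_sum_natCard_embedding (α := α) (Fin N)
  simp only [Nat.card_fun, Nat.card_eq_fintype_card (α := Fin N), Fintype.card_fin, hcard] at hfun
  simp only [Set.mem_ofPred_eq, eval_finsetSum, descPochhammer_eval_eq_descFactorial, eval_pow,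
    eval_X]
  exact_mod_cast hfun.symm

theorem nBlocks_correspondence (s : Setoid α) (r : {r : Setoid α // s ≤ r}) :
    nBlocks (Setoid.correspondence s r) = nBlocks r.1 := by
  have hker : Setoid.correspondence s r = Setoid.ker (Quot.mapRight r.2) := by
    ext ⟨x⟩ ⟨y⟩
    exact (Quotient.eq (r := r.1)).symm
  rw [nBlocks, nBlocks, hker]
  exact Nat.card_congr (Setoid.quotientQuotientEquivQuotient s r.1 r.2)

theorem card_filter_mk_eq_mk [Fintype α] (s : Setoid α) (z : α) :
    #{x | (⟦x⟧ : Quotient s) = ⟦z⟧} = Nat.card {y // s z y} := by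
  rw [Nat.card_eq_fintype_card, Fintype.card_subtype]
  congr 1
  ext x
  simp only [mem_filter, mem_univ, true_and, Quotient.eq]
  exact ⟨s.symm, s.symm⟩

theorem IsEvenPartition.mono [Finite α] {s r : Setoid α} (hs : IsEvenPartition s) (h : s ≤ r) :
    IsEvenPartition r := by
  intro x
  have := Fintype.ofFinite α
  rw [Nat.card_eq_fintype_card, Fintype.card_subtype,
    card_eq_sum_card_fiberwise (f := fun y => (⟦y⟧ : Quotient s)) (t := univ)
      fun _ _ => mem_coe.2 (mem_univ _)]
  refine even_sum _ fun c _ => ?_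
  induction c using Quotient.ind with | _ z => ?_
  by_cases hz : r x z
  · have hblock (a : α) : r x a ∧ (⟦a⟧ : Quotient s) = ⟦z⟧ ↔ (⟦a⟧ : Quotient s) = ⟦z⟧ :=
      and_iff_right_of_imp fun ha => r.trans hz (h (Quotient.exact ha.symm))
    rw [filter_filter]
    simp_rw [hblock, card_filter_mk_eq_mk]
    exact hs z
  · have hempty : ({a | r x a ∧ (⟦a⟧ : Quotient s) = ⟦z⟧} : Finset α) = ∅ :=
      filter_eq_empty_iff.2 fun a _ hxa => hz (r.trans hxa.1 (h (Quotient.exact hxa.2)))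
    rw [filter_filter, hempty, card_empty]
    exact ⟨0, rfl⟩

theorem two_mul_nBlocks_le [Finite α] {s : Setoid α} (hs : IsEvenPartition s) :
    2 * nBlocks s ≤ Nat.card α := by
  have := Fintype.ofFinite α
  have := Fintype.ofFinite (Quotient s)
  rw [Nat.card_eq_fintype_card, ← card_univ,
    card_eq_sum_card_fiberwise (f := fun y => (⟦y⟧ : Quotient s)) (t := univ)
      fun _ _ => mem_coe.2 (mem_univ _),
    nBlocks, Nat.card_eq_fintype_card, mul_comm, ← smul_eq_mul, ← card_univ, ← sum_const]
  refine sum_le_sum fun c _ => ?_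
  induction c using Quotient.ind with | _ z => ?_
  rw [card_filter_mk_eq_mk]
  obtain ⟨k, hk⟩ := hs z
  have : 0 < Nat.card {y // s z y} := Nat.card_pos_iff.2 ⟨⟨z, s.refl z⟩, inferInstance⟩
  omega

end SetPartition

section ZetaMatrix

variable {ι R : Type*} [Fintype ι] [DecidableEq ι] [PartialOrder ι] [DecidableLE ι] [CommRing R]

theorem det_zeta : (Matrix.of fun p r : ι => if p ≤ r then (1 : R) else 0).det = 1 := by
  let e : ι ≃ LinearExtension ι := Equiv.refl ι
  let : Fintype (LinearExtension ι) := ‹Fintype ι›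
  rw [← Matrix.det_reindex_self e, Matrix.det_of_isUpperTriangular]
  · exact prod_eq_one fun i _ => if_pos le_rfl
  · intro i j hji
    exact if_neg fun hij => ((toLinearExtension (α := ι)).monotone hij).not_gt hji

theorem det_eq_prod_of_apply_eq_sum_common_upperBounds (M : Matrix ι ι R) (f : ι → R)
    (hM : ∀ p q, M p q = ∑ r with p ≤ r ∧ q ≤ r, f r) : M.det = ∏ r, f r := by
  let Z : Matrix ι ι R := Matrix.of fun p r => if p ≤ r then 1 else 0
  have hfactor : M = Z * Matrix.diagonal f * Z.transpose := by
    ext p q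
    rw [hM, Matrix.mul_apply, sum_filter]
    refine sum_congr rfl fun r _ => ?_
    by_cases hp : p ≤ r <;> by_cases hq : q ≤ r <;> simp [Z, Matrix.mul_diagonal, hp, hq]
  rw [hfactor, Matrix.det_mul, Matrix.det_mul, Matrix.det_transpose, det_zeta,
    Matrix.det_diagonal, one_mul, mul_one]

end ZetaMatrix

section Gram

variable {α R : Type*} [CommRing R] [IsDomain R] [CharZero R]

theorem sum_descPochhammer_nBlocks_of_le [Finite α] [Fintype (Setoid α)] (s : Setoid α) :
    ∑ r with s ≤ r, descPochhammer R (nBlocks r) = X ^ nBlocks s := by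
  have := Fintype.ofFinite (Setoid (Quotient s))
  rw [sum_subtype _ (p := (s ≤ ·)) fun r => by simp,
    Fintype.sum_equiv (Setoid.correspondence s).toEquiv _ (fun σ => descPochhammer R (nBlocks σ))
      fun r => congrArg _ (nBlocks_correspondence s r).symm]
  exact sum_descPochhammer_nBlocks

theorem sum_descPochhammer_nBlocks_of_isEvenPartition_le [Finite α]
    [Fintype {r : Setoid α // IsEvenPartition r}] {s : Setoid α} (hs : IsEvenPartition s) :
    ∑ r : {r : Setoid α // IsEvenPartition r} with s ≤ r.1, descPochhammer R (nBlocks r.1) =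
      X ^ nBlocks s := by
  have := Fintype.ofFinite (Setoid α)
  rw [← sum_descPochhammer_nBlocks_of_le]
  refine (sum_map _ (Function.Embedding.subtype _) fun r => descPochhammer R (nBlocks r)).symm.trans
    (sum_congr ?_ fun _ _ => rfl)
  ext r
  simp only [mem_map, mem_filter, mem_univ, true_and, Function.Embedding.subtype_apply]
  exact ⟨fun ⟨r', hr', h⟩ => h ▸ hr', fun hr => ⟨⟨r, hs.mono hr⟩, hr, rfl⟩⟩

theorem gram2_apply_eq_sum (m : ℕ) (p q : {s : Setoid (Fin (2 * m)) // IsEvenPartition s}) :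
    Gram2 m p q = ∑ r with p ≤ r ∧ q ≤ r, descPochhammer ℂ (nBlocks r.1) := by
  have hsup (r : {s : Setoid (Fin (2 * m)) // IsEvenPartition s}) :
      p ≤ r ∧ q ≤ r ↔ p.1 ⊔ q.1 ≤ r.1 := by
    rw [sup_le_iff]
    rfl
  simp_rw [hsup]
  rw [sum_descPochhammer_nBlocks_of_isEvenPartition_le (p.2.mono le_sup_left)]
  rfl

end Gram

theorem descPochhammer_eq_prod_range (R : Type*) [CommRing R] (n : ℕ) :
    descPochhammer R n = ∏ j ∈ range n, (X - C (j : R)) := by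
  induction n with
  | zero => simp
  | succ n ih => rw [descPochhammer_succ_right, ih, prod_range_succ, map_natCast]

theorem prod_prod_range_eq_prod_pow_card {ι M : Type*} [Fintype ι] [CommMonoid M] (b : ι → ℕ)
    (g : ℕ → M) {S : Finset ℕ} (hS : ∀ i, range (b i) ⊆ S) :
    ∏ i, ∏ j ∈ range (b i), g j = ∏ j ∈ S, g j ^ #{i | j < b i} := calc
  ∏ i, ∏ j ∈ range (b i), g j = ∏ i, ∏ j ∈ S, if j < b i then g j else 1 := by
    refine prod_congr rfl fun i _ => ?_
    rw [← prod_filter]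
    congr 1
    ext j
    simpa using fun h : j < b i => hS i (mem_range.2 h)
  _ = ∏ j ∈ S, ∏ i, if j < b i then g j else 1 := prod_comm
  _ = ∏ j ∈ S, g j ^ #{i | j < b i} := prod_congr rfl fun j _ => by rw [← prod_filter, prod_const]

theorem card_filter_lt_eq_sub {ι : Type*} [Fintype ι] (b : ι → ℕ) {m j : ℕ} (hb : ∀ i, b i ≤ m) :
    #{i | j < b i} = #{i | b i ∈ Icc 1 m} - #{i | b i ∈ Icc 1 j} := by
  have hsplit :
      univ.filter (b · ∈ Icc 1 j) ∪ univ.filter (j < b ·) = univ.filter (b · ∈ Icc 1 m) := by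
    ext i
    have := hb i
    simp only [mem_union, mem_filter, mem_univ, true_and, mem_Icc]
    omega
  have hdisj : Disjoint (univ.filter (b · ∈ Icc 1 j)) (univ.filter (j < b ·)) :=
    disjoint_filter.2 fun i _ h => by rw [mem_Icc] at h; omega
  rw [← hsplit, card_union_of_disjoint hdisj]
  omega

section EvenPartitionCount

variable (m : ℕ)

theorem T_eq_card_filter (t : ℕ) :
    T m t = #{r : {s : Setoid (Fin (2 * m)) // IsEvenPartition s} | nBlocks r.1 = t} := by
  rw [T, Nat.card_congr
    (Equiv.subtypeSubtypeEquivSubtypeInter IsEvenPartition fun s => nBlocks s = t).symm,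
    Nat.card_eq_fintype_card, Fintype.card_subtype]

theorem nBlocks_le_of_isEvenPartition {s : Setoid (Fin (2 * m))} (hs : IsEvenPartition s) :
    nBlocks s ≤ m := by
  have := two_mul_nBlocks_le hs
  rw [Nat.card_fin] at this
  omega

theorem card_filter_lt_nBlocks (j : ℕ) :
    #{r : {s : Setoid (Fin (2 * m)) // IsEvenPartition s} | j < nBlocks r.1} =
      ∑ t ∈ Icc 1 m, T m t - ∑ t ∈ Icc 1 j, T m t := by
  simp_rw [T_eq_card_filter, sum_card_fiberwise_eq_card_filter]
  exact card_filter_lt_eq_sub _ fun r => nBlocks_le_of_isEvenPartition m r.2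

end EvenPartitionCount

theorem gram2_det_factorisation_general (m : ℕ)
    (D : ℕ) (hD : D = ∑ t ∈ Finset.Icc 1 m, T m t) :
    (Gram2 m).det =
      Polynomial.X ^ D *
        ∏ k ∈ Finset.Icc 1 (m - 1),
          (Polynomial.X - Polynomial.C (k : ℂ)) ^ (D - ∑ t ∈ Finset.Icc 1 k, T m t) := by
  have hS (r : {s : Setoid (Fin (2 * m)) // IsEvenPartition s}) :
      range (nBlocks r.1) ⊆ insert 0 (Icc 1 (m - 1)) := by
    intro j hj
    have := nBlocks_le_of_isEvenPartition m r.2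
    simp only [mem_range, mem_insert, mem_Icc] at hj ⊢
    omega
  rw [det_eq_prod_of_apply_eq_sum_common_upperBounds _ _ (gram2_apply_eq_sum m)]
  simp_rw [descPochhammer_eq_prod_range]
  rw [prod_prod_range_eq_prod_pow_card _ _ hS,
    prod_insert (by simp : 0 ∉ Icc 1 (m - 1))]
  simp_rw [card_filter_lt_nBlocks, ← hD]
  simp

theorem gram2_det_factorisation (m : ℕ) (hm : 1 ≤ m)
    (D : ℕ) (hD : D = ∑ t ∈ Finset.Icc 1 m, T m t) :
    (Gram2 m).det =
      Polynomial.X ^ D *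
        ∏ k ∈ Finset.Icc 1 (m - 1),
          (Polynomial.X - Polynomial.C (k : ℂ)) ^ (D - ∑ t ∈ Finset.Icc 1 k, T m t) :=
  gram2_det_factorisation_general m D hD

end
end

section
/- For m ≥ 1, the polynomial det Γ²_{2m} ∈ ℂ[δ] has degree Σ_{t=1}^{m} t·T(m,t). -/
/-!
Since `p ≤ p ∨ q`, the block count satisfies `b(p ∨ q) ≤ b(p)`, with equality only if `q`
refines `p`. In the Leibniz expansion of `det Γ²_{2m}` the term of a permutation `σ` is
`± δ^{∑_p b(σ p ∨ p)}`, and `∑_p b(σ p ∨ p) ≤ ∑_p b(σ p) = ∑_p b(p)`. Equality forces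
`p ≤ σ p` for all `p`, hence `b(σ p) ≤ b(p)` termwise with equal sums, so `p = σ p`: the
identity term `δ^{∑_p b(p)}` strictly dominates. Grouping the even partitions by their
number of blocks turns `∑_p b(p)` into `∑_t t·T(m,t)`.
-/

open scoped Classical

noncomputable section

open Finset Polynomial

theorem Setoid.map_of_le_surjective {X : Type*} {s t : Setoid X} (h : s ≤ t) :
    Function.Surjective (Setoid.map_of_le h) :=
  Quotient.ind fun x => ⟨Quotient.mk s x, rfl⟩

section Blocks

variable {X : Type*} [Finite X]

theorem nBlocks_le_of_le {s t : Setoid X} (h : s ≤ t) : nBlocks t ≤ nBlocks s :=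
  Nat.card_le_card_of_surjective _ (Setoid.map_of_le_surjective h)

theorem eq_of_le_of_nBlocks_le {s t : Setoid X} (h : s ≤ t) (hc : nBlocks s ≤ nBlocks t) :
    s = t := by
  have hinj := ((Setoid.map_of_le_surjective h).bijective_of_nat_card_le hc).injective
  exact le_antisymm h fun x y hxy => Quotient.exact (hinj (Quotient.sound hxy))

theorem IsEvenPartition.two_le_card_fiber {s : Setoid X} (hs : IsEvenPartition s) (q : Quotient s) :
    2 ≤ Nat.card {x // Quotient.mk s x = q} := by
  induction q using Quotient.ind with
  | _ a =>
    have hblock : {x // Quotient.mk s x = Quotient.mk s a} ≃ {y // s.r a y} :=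
      Equiv.subtypeEquivRight fun x => Quotient.eq.trans s.comm'
    have : Nonempty {y // s.r a y} := ⟨⟨a, s.refl' a⟩⟩
    have hpos : 0 < Nat.card {y // s.r a y} := Nat.card_pos
    obtain ⟨k, hk⟩ := hs a
    rw [Nat.card_congr hblock]
    omega

theorem IsEvenPartition.two_mul_nBlocks_le_card {s : Setoid X} (hs : IsEvenPartition s) :
    2 * nBlocks s ≤ Nat.card X := by
  have := Fintype.ofFinite (Quotient s)
  calc 2 * nBlocks s = ∑ _q : Quotient s, 2 := by
        rw [sum_const, smul_eq_mul, card_univ, nBlocks, Nat.card_eq_fintype_card, mul_comm]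
    _ ≤ ∑ q : Quotient s, Nat.card {x // Quotient.mk s x = q} :=
        sum_le_sum fun q _ => hs.two_le_card_fiber q
    _ = Nat.card X := by
        rw [← Nat.card_sigma, Nat.card_congr (Equiv.sigmaFiberEquiv _)]

theorem sum_nBlocks_sup_perm_lt {ι : Type*} [Fintype ι] {P : ι → Setoid X}
    (hP : Function.Injective P) {σ : Equiv.Perm ι} (hσ : σ ≠ 1) :
    ∑ i, nBlocks (P (σ i) ⊔ P i) < ∑ i, nBlocks (P i) := by
  have hsup (i : ι) : nBlocks (P (σ i) ⊔ P i) ≤ nBlocks (P (σ i)) :=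
    nBlocks_le_of_le le_sup_left
  have hperm : ∑ i, nBlocks (P (σ i)) = ∑ i, nBlocks (P i) :=
    Equiv.sum_comp σ fun i => nBlocks (P i)
  refine ((sum_le_sum fun i _ => hsup i).trans_eq hperm).lt_of_ne fun heq => hσ ?_
  have hle (i : ι) : P i ≤ P (σ i) := by
    have hi := (sum_eq_sum_iff_of_le fun i _ => hsup i).1 (heq.trans hperm.symm) i (mem_univ i)
    exact sup_eq_left.1 (eq_of_le_of_nBlocks_le le_sup_left hi.ge).symm
  have hrank := (sum_eq_sum_iff_of_le fun i _ => nBlocks_le_of_le (hle i)).1 hperm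
  exact Equiv.ext fun i =>
    (hP (eq_of_le_of_nBlocks_le (hle i) (hrank i (mem_univ i)).ge)).symm

end Blocks

theorem Matrix.degree_det_of_X_pow {R ι : Type*} [CommRing R] [Nontrivial R] [Fintype ι]
    [DecidableEq ι] (e : ι → ι → ℕ)
    (he : ∀ σ : Equiv.Perm ι, σ ≠ 1 → ∑ i, e (σ i) i < ∑ i, e i i) :
    (Matrix.of fun i j => (X : R[X]) ^ e i j).det.degree = ↑(∑ i, e i i) := by
  rw [Matrix.det_apply, ← add_sum_erase _ _ (mem_univ 1)]
  simp only [Matrix.of_apply, prod_pow_eq_pow_sum, Equiv.Perm.sign_one, one_smul,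
    Equiv.Perm.one_apply]
  have hlower : (∑ σ ∈ univ.erase 1, Equiv.Perm.sign σ • (X : R[X]) ^ ∑ i, e (σ i) i).degree <
      ↑(∑ i, e i i) := by
    refine (degree_sum_le _ _).trans_lt
      ((Finset.sup_lt_iff (WithBot.bot_lt_coe _)).2 fun σ hσ => ?_)
    exact (degree_smul_le _ _).trans_lt
      ((degree_X_pow_le _).trans_lt (mod_cast he σ (ne_of_mem_erase hσ)))
  rw [degree_add_eq_left_of_degree_lt, degree_X_pow]
  rwa [degree_X_pow]

abbrev EvenSetPartition (m : ℕ) := {s : Setoid (Fin (2 * m)) // IsEvenPartition s}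

theorem T_eq_card_filter_s1 (m t : ℕ) :
    T m t = #{p : EvenSetPartition m | nBlocks p.1 = t} := by
  rw [T, Nat.card_congr (Equiv.subtypeSubtypeEquivSubtypeInter IsEvenPartition
    fun s => nBlocks s = t).symm, Nat.card_eq_fintype_card, Fintype.card_subtype]

theorem sum_nBlocks_evenSetPartition (m : ℕ) :
    ∑ p : EvenSetPartition m, nBlocks p.1 = ∑ t ∈ Icc 1 m, t * T m t := by
  have hmaps (p : EvenSetPartition m) : nBlocks p.1 ∈ range (m + 1) := by
    have := p.2.two_mul_nBlocks_le_card
    rw [Nat.card_fin] at this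
    exact mem_range.2 (by omega)
  calc ∑ p : EvenSetPartition m, nBlocks p.1
      = ∑ t ∈ range (m + 1), ∑ p ∈ {p : EvenSetPartition m | nBlocks p.1 = t}, nBlocks p.1 :=
        (sum_fiberwise_of_maps_to (fun p _ => hmaps p) _).symm
    _ = ∑ t ∈ range (m + 1), t * T m t := sum_congr rfl fun t _ => by
        rw [sum_congr rfl fun p hp => (mem_filter.1 hp).2, sum_const, smul_eq_mul,
          T_eq_card_filter_s1, mul_comm]
    _ = ∑ t ∈ Icc 1 m, t * T m t := by
        refine (sum_subset (fun t ht => ?_) fun t ht ht' => ?_).symm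
        · simp only [mem_range, mem_Icc] at ht ⊢
          omega
        · obtain rfl : t = 0 := by
            simp only [mem_range, mem_Icc] at ht ht'
            omega
          exact zero_mul _

theorem gram2_det_degree_general (m : ℕ) :
    (Gram2 m).det.degree = ((∑ t ∈ Finset.Icc 1 m, t * T m t : ℕ) : WithBot ℕ) := by
  have hdeg := Matrix.degree_det_of_X_pow (R := ℂ)
    (fun p q : EvenSetPartition m => nBlocks (p.1 ⊔ q.1))
    fun _ hσ => by
      simpa only [sup_idem] using sum_nBlocks_sup_perm_lt Subtype.val_injective hσ
  simp only [sup_idem] at hdeg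
  rw [← sum_nBlocks_evenSetPartition]
  exact hdeg

theorem gram2_det_degree (m : ℕ) (hm : 1 ≤ m) :
    (Gram2 m).det.degree = ((∑ t ∈ Finset.Icc 1 m, t * T m t : ℕ) : WithBot ℕ) :=
  gram2_det_degree_general m

end
end

section
/- Let I be a nonempty finite index set and e : I × I → ℕ a function satisfying e(i,j) ≤ min(e(i,i), e(j,j)) for all i, j ∈ I, and such that e(i,j) = e(i,i) = e(j,j) implies i = j. Let M be the I × I matrix over ℂ[δ] with M_{ij} = δ^{e(i,j)}. Then det M is a nonzero polynomial of degree Σ_{i∈I} e(i,i) with leading coefficient 1. -/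
open Polynomial Finset

/- Expanding the determinant, the permutation `σ` contributes `± δ^{∑ i, e (σ i) i}`. The
   exponent of the identity is `∑ i, e i i`, and every other permutation has a strictly smaller
   exponent: if `σ i ≠ i`, then `e (σ i) i` falls short of `e i i` or of `e (σ i) (σ i)`, and both
   `∑ i, e i i` and `∑ i, e (σ i) (σ i)` dominate `∑ i, e (σ i) i` termwise. -/

theorem Polynomial.monic_sum_of_degree_lt {R ι : Type*} [Semiring R] [Nontrivial R]
    [DecidableEq ι] {s : Finset ι} {p : ι → R[X]} {i₀ : ι} (hi₀ : i₀ ∈ s)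
    (hmonic : (p i₀).Monic) (hlt : ∀ i ∈ s, i ≠ i₀ → (p i).degree < (p i₀).degree) :
    (∑ i ∈ s, p i).Monic ∧ (∑ i ∈ s, p i).natDegree = (p i₀).natDegree := by
  have hrest : (∑ i ∈ s.erase i₀, p i).degree < (p i₀).degree :=
    (degree_sum_le _ _).trans_lt <|
      (Finset.sup_lt_iff (bot_lt_iff_ne_bot.2 (degree_eq_bot.not.2 hmonic.ne_zero))).2
        fun i hi => hlt i (mem_of_mem_erase hi) (ne_of_mem_erase hi)
  rw [← add_sum_erase s p hi₀]
  exact ⟨hmonic.add_of_left hrest, natDegree_add_eq_left_of_degree_lt hrest⟩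

theorem Matrix.det_of_X_pow {R I : Type*} [CommRing R] [Fintype I] [DecidableEq I]
    (e : I → I → ℕ) :
    (Matrix.of fun i j => (X : R[X]) ^ e i j).det =
      ∑ σ : Equiv.Perm I, Equiv.Perm.sign σ • (X : R[X]) ^ ∑ i, e (σ i) i := by
  simp only [Matrix.det_apply, Matrix.of_apply, prod_pow_eq_pow_sum]

theorem sum_apply_perm_lt_sum_diag {I : Type*} [Fintype I] {e : I → I → ℕ}
    (h1 : ∀ i j, e i j ≤ min (e i i) (e j j))
    (h2 : ∀ i j, e i j = e i i → e i i = e j j → i = j)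
    {σ : Equiv.Perm I} (hσ : σ ≠ 1) :
    ∑ i, e (σ i) i < ∑ i, e i i := by
  have hle_right (j : I) : e (σ j) j ≤ e j j := (h1 _ _).trans (min_le_right _ _)
  have hle_left (j : I) : e (σ j) j ≤ e (σ j) (σ j) := (h1 _ _).trans (min_le_left _ _)
  obtain ⟨i, hi⟩ : ∃ i, σ i ≠ i := by
    by_contra! h
    exact hσ (Equiv.ext h)
  have hdrop : e (σ i) i < e i i ∨ e (σ i) i < e (σ i) (σ i) := by
    by_contra! h
    have hr := le_antisymm (hle_right i) h.1
    have hl := le_antisymm (hle_left i) h.2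
    exact hi (h2 (σ i) i hl (hl.symm.trans hr))
  rcases hdrop with hdrop | hdrop
  · exact sum_lt_sum (fun j _ => hle_right j) ⟨i, mem_univ i, hdrop⟩
  · calc ∑ j, e (σ j) j < ∑ j, e (σ j) (σ j) :=
          sum_lt_sum (fun j _ => hle_left j) ⟨i, mem_univ i, hdrop⟩
      _ = ∑ j, e j j := Equiv.sum_comp σ fun j => e j j

theorem det_monomial_matrix_monic_general (I : Type*) [Fintype I] [DecidableEq I]
    (e : I → I → ℕ)
    (h1 : ∀ i j, e i j ≤ min (e i i) (e j j))
    (h2 : ∀ i j, e i j = e i i → e i i = e j j → i = j) :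
    (Matrix.of fun i j => (Polynomial.X : Polynomial ℂ) ^ e i j).det ≠ 0 ∧
      (Matrix.of fun i j => (Polynomial.X : Polynomial ℂ) ^ e i j).det.natDegree
        = ∑ i, e i i ∧
      (Matrix.of fun i j => (Polynomial.X : Polynomial ℂ) ^ e i j).det.leadingCoeff = 1 := by
  have hlower (σ : Equiv.Perm I) (hσ : σ ≠ 1) :
      (Equiv.Perm.sign σ • (X : ℂ[X]) ^ ∑ i, e (σ i) i).degree <
        ((X : ℂ[X]) ^ ∑ i, e i i).degree := by
    rw [degree_X_pow]
    exact (degree_smul_le _ _).trans_lt <| (degree_X_pow_le _).trans_lt <|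
      WithBot.coe_lt_coe.2 (sum_apply_perm_lt_sum_diag h1 h2 hσ)
  obtain ⟨hmonic, hdeg⟩ := monic_sum_of_degree_lt (mem_univ 1)
    (p := fun σ : Equiv.Perm I => Equiv.Perm.sign σ • (X : ℂ[X]) ^ ∑ i, e (σ i) i)
    (by simp [monic_X_pow]) (by simpa using hlower)
  rw [Matrix.det_of_X_pow]
  exact ⟨hmonic.ne_zero, by simp [hdeg], hmonic.leadingCoeff⟩

theorem det_monomial_matrix_monic (I : Type*) [Fintype I] [DecidableEq I] [Nonempty I]
    (e : I → I → ℕ)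
    (h1 : ∀ i j, e i j ≤ min (e i i) (e j j))
    (h2 : ∀ i j, e i j = e i i → e i i = e j j → i = j) :
    (Matrix.of fun i j => (Polynomial.X : Polynomial ℂ) ^ e i j).det ≠ 0 ∧
      (Matrix.of fun i j => (Polynomial.X : Polynomial ℂ) ^ e i j).det.natDegree
        = ∑ i, e i i ∧
      (Matrix.of fun i j => (Polynomial.X : Polynomial ℂ) ^ e i j).det.leadingCoeff = 1 :=
  det_monomial_matrix_monic_general I e h1 h2
end

section
/- Fix integers n ≥ 1 and Q ≥ 1. The family of Potts vectors (v_p), where p ranges over the set partitions of {1,…,n} with at most Q blocks, is linearly independent over ℂ. -/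
/- Set partitions of `{1,…,n}` are modelled as equivalence relations (`Setoid (Fin n)`);
   `nBlocks` is the number of blocks (equivalence classes).  For a set partition `p`,
   the Potts vector `potts n Q p` is the function sending a word `w : Fin n → Fin Q`
   to `1` if `w` is constant on every block of `p`, and to `0` otherwise. -/

open scoped Classical

noncomputable section

def potts (n Q : ℕ) (p : Setoid (Fin n)) : (Fin n → Fin Q) → ℂ :=
  fun w => if ∀ x y : Fin n, p.r x y → w x = w y then 1 else 0

/-! Choosing for each partition `p` with at most `Q` blocks a word `w_p` whose kernel is `p`,
`v_q (w_p) ≠ 0` exactly when `q` refines `p`. So evaluating at the words `w_p` gives a matrix that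
is triangular for the refinement order with nonzero diagonal, which forces linear independence. -/

theorem LinearIndependent.of_eval_triangular {ι X R : Type*} [PartialOrder ι] [Ring R]
    [NoZeroDivisors R] (f : ι → X → R) (x : ι → X) (hdiag : ∀ i, f i (x i) ≠ 0)
    (hle : ∀ i j, f j (x i) ≠ 0 → j ≤ i) : LinearIndependent R f := by
  rw [linearIndependent_iff']
  intro s g hsum i hi
  by_contra hgi
  -- evaluate the relation at the point of a minimal index of its support
  obtain ⟨p, hp, hpmin⟩ := (s.filter (g · ≠ 0)).exists_minimal ⟨i, by simp [hi, hgi]⟩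
  rw [Finset.mem_filter] at hp
  have heval : ∑ q ∈ s, g q * f q (x p) = g p * f p (x p) := by
    refine Finset.sum_eq_single p (fun q hq hqp => ?_) (fun h => absurd hp.1 h)
    by_contra hne
    have hqp' : q ≤ p := hle p q (right_ne_zero_of_mul hne)
    have hq' : q ∈ s.filter (g · ≠ 0) := Finset.mem_filter.2 ⟨hq, left_ne_zero_of_mul hne⟩
    exact hqp (le_antisymm hqp' (hpmin hq' hqp'))
  have hzero := congrFun hsum (x p)
  simp only [Finset.sum_apply, Pi.smul_apply, smul_eq_mul, Pi.zero_apply, heval] at hzero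
  exact mul_ne_zero hp.2 (hdiag p) hzero

theorem Setoid.exists_ker_eq {X Y : Type*} [Finite X] [Finite Y] (s : Setoid X)
    (h : Nat.card (Quotient s) ≤ Nat.card Y) : ∃ w : X → Y, Setoid.ker w = s := by
  have := Fintype.ofFinite (Quotient s)
  have := Fintype.ofFinite Y
  rw [Nat.card_eq_fintype_card, Nat.card_eq_fintype_card] at h
  obtain ⟨e⟩ := Function.Embedding.nonempty_of_card_le h
  refine ⟨e ∘ Quotient.mk s, ?_⟩
  ext x y
  simp [Setoid.ker_def, e.injective.eq_iff, Quotient.eq]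

theorem potts_ne_zero_iff {n Q : ℕ} (p : Setoid (Fin n)) (w : Fin n → Fin Q) :
    potts n Q p w ≠ 0 ↔ p ≤ Setoid.ker w := by
  simp [potts, Setoid.le_def, Setoid.ker_def]

theorem potts_linearIndependent_general (n Q : ℕ) :
    LinearIndependent ℂ
      (fun p : {p : Setoid (Fin n) // nBlocks p ≤ Q} => potts n Q p.1) := by
  choose w hw using fun p : {p : Setoid (Fin n) // nBlocks p ≤ Q} =>
    p.1.exists_ker_eq (Y := Fin Q) (by rw [Nat.card_fin]; exact p.2)
  refine .of_eval_triangular _ w (fun p => ?_) (fun p q hq => ?_)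
  · rw [potts_ne_zero_iff, hw]
  · rwa [potts_ne_zero_iff, hw] at hq

theorem potts_linearIndependent (n Q : ℕ) (hn : 1 ≤ n) (hQ : 1 ≤ Q) :
    LinearIndependent ℂ
      (fun p : {p : Setoid (Fin n) // nBlocks p ≤ Q} => potts n Q p.1) :=
  potts_linearIndependent_general n Q

end
end

section
/- Fix integers n ≥ 1 and Q ≥ 1. The ℂ-linear span of the Potts vectors v_p, where p ranges over ALL set partitions of {1,…,n}, has dimension Σ_{l=1}^{Q} S(n,l), i.e. the number of set partitions of {1,…,n} with at most Q blocks (here S(n,l) = 0 for l > n). -/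
/- Set partitions of `{1,…,n}` are modelled as equivalence relations (`Setoid (Fin n)`);
   `nBlocks` is the number of blocks, and `S n l` is the Stirling number of the second
   kind.  For a set partition `p`, the Potts vector `potts n Q p` sends a word
   `w : Fin n → Fin Q` to `1` if `w` is constant on every block of `p`, else to `0`. -/

open scoped Classical

noncomputable section

def S (n l : ℕ) : ℕ := Nat.card {s : Setoid (Fin n) // nBlocks s = l}

/- Sorting the words `w : Fin n → Fin Q` by their kernel `Setoid.ker w` (the partition "same
letter"), the Potts vector of `p` is the sum of the indicators `kerIndicator q` of the classes
`{w | ker w = q}` over all `q ≥ p`. This system is unitriangular for the refinement order, so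
the Potts vectors span the same space as the indicators. The indicators are nonzero exactly when
`q` has at most `Q` blocks, and nonzero indicators of disjoint classes are linearly independent;
so the dimension is the number of partitions with between `1` and `Q` blocks. -/

open Finset

instance Setoid.instFinite {X : Type*} [Finite X] : Finite (Setoid X) :=
  Finite.of_injective (fun s : Setoid X => s.r) fun _ _ h =>
    Setoid.ext fun a b => iff_of_eq (congrFun₂ h a b)

instance Setoid.instFintype {X : Type*} [Finite X] : Fintype (Setoid X) := Fintype.ofFinite _

instance Setoid.instLocallyFiniteOrder {X : Type*} [Finite X] : LocallyFiniteOrder (Setoid X) :=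
  Fintype.toLocallyFiniteOrder

def kerIndicator (K : Type*) [Zero K] [One K] {X Y : Type*} (q : Setoid X) : (X → Y) → K :=
  fun w => if Setoid.ker w = q then 1 else 0

section General

variable {X Y : Type*} [Fintype X] [Fintype Y]

theorem exists_ker_eq_iff_nBlocks_le (q : Setoid X) :
    (∃ w : X → Y, Setoid.ker w = q) ↔ nBlocks q ≤ Fintype.card Y := by
  rw [nBlocks, Nat.card_eq_fintype_card, ← Function.Embedding.nonempty_iff_card_le]
  constructor
  · rintro ⟨w, rfl⟩
    exact ⟨⟨Setoid.kerLift w, Setoid.kerLift_injective w⟩⟩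
  · rintro ⟨f⟩
    refine ⟨fun x => f ⟦x⟧, Setoid.ext fun x y => ?_⟩
    rw [Setoid.ker_def, f.injective.eq_iff, Quotient.eq]

theorem kerIndicator_eq_zero_of_card_lt (K : Type*) [Zero K] [One K] {q : Setoid X}
    (h : Fintype.card Y < nBlocks q) : kerIndicator K (Y := Y) q = 0 := by
  funext w
  have hw : Setoid.ker w ≠ q := fun hw =>
    h.not_ge ((exists_ker_eq_iff_nBlocks_le q).mp ⟨w, hw⟩)
  simp [kerIndicator, hw]

theorem linearIndependent_kerIndicator (K : Type*) [Ring K] :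
    LinearIndependent K fun q : {q : Setoid X // nBlocks q ≤ Fintype.card Y} =>
      kerIndicator K (Y := Y) q.1 := by
  rw [Fintype.linearIndependent_iff]
  intro g hg q₀
  obtain ⟨w₀, hw₀⟩ := (exists_ker_eq_iff_nBlocks_le q₀.1).mpr q₀.2
  have hker (q : {q : Setoid X // nBlocks q ≤ Fintype.card Y}) :
      kerIndicator K q.1 w₀ = if q = q₀ then 1 else 0 := by
    simp only [kerIndicator, hw₀, ← Subtype.ext_iff, eq_comm (a := q)]
  simpa [hker] using congrFun hg w₀

theorem nBlocks_pos [Nonempty X] (q : Setoid X) : 0 < nBlocks q :=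
  have := (nonempty_quotient_iff q).mpr ‹_›
  Nat.card_pos

theorem card_nBlocks_le_eq_sum [Nonempty X] (m : ℕ) :
    Fintype.card {q : Setoid X // nBlocks q ≤ m} =
      ∑ l ∈ Icc 1 m, Nat.card {q : Setoid X // nBlocks q = l} := by
  rw [Fintype.card_subtype, card_eq_sum_card_fiberwise (f := nBlocks) (t := Icc 1 m)
    fun q hq => mem_Icc.mpr ⟨nBlocks_pos q, (mem_filter.mp hq).2⟩]
  refine sum_congr rfl fun l hl => ?_
  rw [Nat.card_eq_fintype_card, Fintype.card_subtype, filter_filter]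
  congr 1
  exact filter_congr fun q _ => ⟨And.right, fun h => ⟨h ▸ (mem_Icc.mp hl).2, h⟩⟩

end General

section Potts

variable {n Q : ℕ}

theorem potts_apply (p : Setoid (Fin n)) (w : Fin n → Fin Q) :
    potts n Q p w = if p ≤ Setoid.ker w then 1 else 0 := by
  simp only [potts, Setoid.le_def, Setoid.ker_def]

theorem potts_eq_sum_kerIndicator (p : Setoid (Fin n)) :
    potts n Q p = ∑ q ∈ Ici p, kerIndicator ℂ q := by
  funext w
  simp [potts_apply, kerIndicator, Finset.sum_apply]

theorem kerIndicator_mem_span_potts (q : Setoid (Fin n)) :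
    kerIndicator ℂ q ∈ Submodule.span ℂ (Set.range (potts n Q)) := by
  induction q using WellFoundedGT.induction with
  | _ q ih =>
    have h : kerIndicator ℂ q = potts n Q q - ∑ r ∈ Ioi q, kerIndicator ℂ r := by
      rw [potts_eq_sum_kerIndicator, Ici_eq_cons_Ioi, sum_cons, add_sub_cancel_right]
    rw [h]
    exact Submodule.sub_mem _ (Submodule.subset_span ⟨q, rfl⟩)
      (Submodule.sum_mem _ fun r hr => ih r (mem_Ioi.mp hr))

theorem span_potts_eq_span_kerIndicator :
    Submodule.span ℂ (Set.range (potts n Q)) =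
      Submodule.span ℂ (Set.range
        fun q : {q : Setoid (Fin n) // nBlocks q ≤ Fintype.card (Fin Q)} => kerIndicator ℂ q.1) := by
  apply le_antisymm <;> rw [Submodule.span_le]
  · rintro _ ⟨p, rfl⟩
    rw [potts_eq_sum_kerIndicator]
    refine Submodule.sum_mem _ fun q _ => ?_
    by_cases hq : nBlocks q ≤ Fintype.card (Fin Q)
    · exact Submodule.subset_span ⟨⟨q, hq⟩, rfl⟩
    · rw [kerIndicator_eq_zero_of_card_lt ℂ (not_le.mp hq)]
      exact Submodule.zero_mem _
  · rintro _ ⟨q, rfl⟩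
    exact kerIndicator_mem_span_potts q.1

end Potts

theorem potts_span_finrank_general (n Q : ℕ) (hn : 1 ≤ n) :
    Module.finrank ℂ (Submodule.span ℂ (Set.range (potts n Q)))
      = ∑ l ∈ Finset.Icc 1 Q, S n l := by
  have : Nonempty (Fin n) := ⟨⟨0, hn⟩⟩
  rw [span_potts_eq_span_kerIndicator, finrank_span_eq_card (linearIndependent_kerIndicator ℂ),
    card_nBlocks_le_eq_sum, Fintype.card_fin]
  rfl

theorem potts_span_finrank (n Q : ℕ) (hn : 1 ≤ n) (hQ : 1 ≤ Q) :
    Module.finrank ℂ (Submodule.span ℂ (Set.range (potts n Q)))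
      = ∑ l ∈ Finset.Icc 1 Q, S n l :=
  potts_span_finrank_general n Q hn

end
end

section
/- For n ≥ 1 and Q = 2, the ℂ-linear span of the Potts vectors v_p, where p ranges over all set partitions of {1,…,n}, has dimension 2^{n−1}. -/
/- Set partitions of `{1,…,n}` are modelled as equivalence relations (`Setoid (Fin n)`);
   `nBlocks` is the number of blocks (equivalence classes).  For a set partition `p`,
   the Potts vector `potts n Q p` is the function sending a word `w : Fin n → Fin Q`
   to `1` if `w` is constant on every block of `p`, and to `0` otherwise. -/

open scoped Classical

noncomputable section

/-! For `Q = 2` every Potts vector is invariant under the global spin flip `w ↦ Fin.rev ∘ w`.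
Conversely, the indicator of each flip orbit `{u, Fin.rev ∘ u}` is a combination of Potts vectors:
it is `v_⊤` when `u` is constant and `v_{ker u} - v_⊤` otherwise, since a word that is constant on
the fibres of a non-constant `u` is `u`, its flip, or constant. Hence the span is the space of
flip-invariant functions, whose dimension is the number of flip orbits, `2 ^ n / 2`. -/

section Involution

variable (K : Type*) {X : Type*} [Semiring K] (σ : X → X)

def invariantFunctions : Submodule K (X → K) where
  carrier := {f | ∀ x, f (σ x) = f x}
  add_mem' hf hg x := by simp only [Pi.add_apply, hf x, hg x]
  zero_mem' _ := rfl
  smul_mem' c f hf x := by simp only [Pi.smul_apply, hf x]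

variable {K σ} (hσ : Function.Involutive σ) {S : Set X} (hS : ∀ x, σ x ∈ S ↔ x ∉ S)
include hσ hS

def invariantFunctionsEquiv : invariantFunctions K σ ≃ₗ[K] (S → K) where
  toFun f s := f.1 s
  map_add' _ _ := rfl
  map_smul' _ _ := rfl
  invFun g := ⟨fun x => if hx : x ∈ S then g ⟨x, hx⟩ else g ⟨σ x, (hS x).2 hx⟩, fun x => by
    by_cases hx : x ∈ S
    · have hσx : σ x ∉ S := fun h => (hS x).1 h hx
      simp only [dif_neg hσx, dif_pos hx, hσ x]
    · simp only [dif_pos ((hS x).2 hx), dif_neg hx]⟩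
  left_inv f := by
    ext x
    by_cases hx : x ∈ S
    · simp [hx]
    · simp [hx, f.2 x]
  right_inv g := by
    ext s
    simp [s.2]

theorem two_mul_finrank_invariantFunctions [StrongRankCondition K] [Fintype X] :
    2 * Module.finrank K (invariantFunctions K σ) = Nat.card X := by
  have hcompl : Nat.card S = Nat.card (Sᶜ : Set X) :=
    Nat.card_congr <| (hσ.toPerm σ).subtypeEquiv fun x => by simp [hS]
  rw [(invariantFunctionsEquiv hσ hS).finrank_eq, Module.finrank_fintype_fun_eq_card,
    ← Nat.card_eq_fintype_card, two_mul]
  nth_rw 2 [hcompl]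
  exact S.ncard_add_ncard_compl

theorem eq_sum_indicator_of_mem_invariantFunctions [Fintype X] {f : X → K}
    (hf : f ∈ invariantFunctions K σ) :
    f = ∑ u : S, f u • ({u.1, σ u} : Set X).indicator 1 := by
  ext x
  simp only [Finset.sum_apply, Pi.smul_apply, Set.indicator_apply, Set.mem_insert_iff,
    Set.mem_singleton_iff, Pi.one_apply, smul_eq_mul, mul_ite, mul_one, mul_zero]
  by_cases hx : x ∈ S
  · rw [Finset.sum_eq_single ⟨x, hx⟩]
    · simp
    · rintro u - hu
      rw [if_neg]
      rintro (h | h)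
      · exact hu (Subtype.ext h.symm)
      · exact (hS u).1 (h ▸ hx) u.2
    · simp
  · rw [Finset.sum_eq_single ⟨σ x, (hS x).2 hx⟩]
    · simp [hσ x, hf x]
    · rintro u - hu
      rw [if_neg]
      rintro (h | h)
      · exact hx (h ▸ u.2)
      · exact hu (Subtype.ext (by simp [h, hσ _]))
    · simp

end Involution

section Potts

variable {n Q : ℕ}

theorem potts_comp_of_injective {σ : Fin Q → Fin Q} (hσ : σ.Injective) (p : Setoid (Fin n))
    (w : Fin n → Fin Q) : potts n Q p (σ ∘ w) = potts n Q p w := by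
  simp only [potts, Function.comp_apply, hσ.eq_iff]

theorem potts_top_apply (w : Fin n → Fin Q) :
    potts n Q ⊤ w = if ∀ x y, w x = w y then 1 else 0 := by
  simp [potts]

theorem potts_ker_apply (u w : Fin n → Fin Q) :
    potts n Q (Setoid.ker u) w = if w.FactorsThrough u then 1 else 0 := by
  simp only [potts, Function.FactorsThrough, Setoid.ker_def]
  congr

theorem fin_two_fun_eq_id_or_rev_or_const (g : Fin 2 → Fin 2) :
    g = id ∨ g = Fin.rev ∨ ∀ a b, g a = g b := by
  revert g; decide

theorem rev_comp_involutive : Function.Involutive (Fin.rev ∘ · : (Fin n → Fin 2) → _) :=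
  fun w => by ext; simp

theorem rev_comp_mem_iff (i : Fin n) (w : Fin n → Fin 2) :
    Fin.rev ∘ w ∈ {v | v i = 0} ↔ w ∉ {v | v i = 0} := by
  simp only [Set.mem_ofPred_eq, Function.comp_apply]
  generalize w i = a
  revert a; decide

theorem potts_ker_eq_indicator_add_potts_top {u : Fin n → Fin 2} {a b : Fin n}
    (hab : u a ≠ u b) :
    potts n 2 (Setoid.ker u) = ({u, Fin.rev ∘ u} : Set _).indicator 1 + potts n 2 ⊤ := by
  ext w
  rw [Pi.add_apply, potts_ker_apply, potts_top_apply]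
  by_cases hw : w = u ∨ w = Fin.rev ∘ u
  · have hfac : w.FactorsThrough u := by
      rcases hw with rfl | rfl
      · exact fun _ _ h => h
      · exact fun _ _ h => by simp [h]
    have hnonconst : ¬ ∀ x y, w x = w y := by
      rcases hw with rfl | rfl
      · exact fun h => hab (h a b)
      · exact fun h => hab (Fin.rev_injective (h a b))
    simp [hfac, hnonconst, Set.indicator_of_mem (show w ∈ ({u, Fin.rev ∘ u} : Set _) from hw)]
  · rw [Set.indicator_of_notMem (show w ∉ ({u, Fin.rev ∘ u} : Set _) from hw), zero_add]
    congr 1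
    refine propext ⟨fun hfac => ?_, fun hconst x y _ => hconst x y⟩
    rw [← hfac.extend_comp id] at hw ⊢
    rcases fin_two_fun_eq_id_or_rev_or_const (Function.extend u w id) with hg | hg | hg
    · exact absurd (Or.inl (by rw [hg]; rfl)) hw
    · exact absurd (Or.inr (by rw [hg])) hw
    · exact fun x y => hg _ _

theorem potts_top_eq_indicator {u : Fin n → Fin 2} (hu : ∀ x y, u x = u y) :
    potts n 2 ⊤ = ({u, Fin.rev ∘ u} : Set _).indicator 1 := by
  ext w
  rw [potts_top_apply, Set.indicator_apply]
  congr 1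
  refine propext ⟨fun hw => ?_, ?_⟩
  · rcases isEmpty_or_nonempty (Fin n) with hn | ⟨⟨a⟩⟩
    · exact Or.inl (Subsingleton.elim _ _)
    · have hwa : w a = u a ∨ w a = Fin.rev (u a) := by
        generalize w a = c; generalize u a = d; revert c d; decide
      rcases hwa with h | h
      · exact Or.inl (funext fun x => by rw [hw x a, h, hu a x])
      · exact Or.inr (funext fun x => by rw [hw x a, h, hu a x]; rfl)
  · rintro (rfl | rfl) x y
    · exact hu x y
    · simp [hu x y]

theorem indicator_mem_span_potts (u : Fin n → Fin 2) :
    ({u, Fin.rev ∘ u} : Set _).indicator 1 ∈ Submodule.span ℂ (Set.range (potts n 2)) := by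
  have hmem (p : Setoid (Fin n)) : potts n 2 p ∈ Submodule.span ℂ (Set.range (potts n 2)) :=
    Submodule.subset_span ⟨p, rfl⟩
  by_cases hu : ∀ x y, u x = u y
  · exact potts_top_eq_indicator hu ▸ hmem ⊤
  · push Not at hu
    obtain ⟨a, b, hab⟩ := hu
    rw [eq_sub_of_add_eq (potts_ker_eq_indicator_add_potts_top hab).symm]
    exact sub_mem (hmem _) (hmem _)

theorem span_potts_two_eq_invariantFunctions (i : Fin n) :
    Submodule.span ℂ (Set.range (potts n 2)) = invariantFunctions ℂ (Fin.rev ∘ ·) := by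
  apply le_antisymm
  · rw [Submodule.span_le]
    rintro _ ⟨p, rfl⟩ w
    exact potts_comp_of_injective Fin.rev_injective p w
  · intro f hf
    rw [eq_sum_indicator_of_mem_invariantFunctions rev_comp_involutive
      (rev_comp_mem_iff i) hf]
    exact Submodule.sum_mem _ fun u _ => Submodule.smul_mem _ _ (indicator_mem_span_potts u.1)

end Potts

theorem potts_span_finrank_two (n : ℕ) (hn : 1 ≤ n) :
    Module.finrank ℂ (Submodule.span ℂ (Set.range (potts n 2)))
      = 2 ^ (n - 1) := by
  obtain ⟨m, rfl⟩ : ∃ m, n = m + 1 := ⟨n - 1, by omega⟩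
  have h := two_mul_finrank_invariantFunctions (K := ℂ) rev_comp_involutive
    (rev_comp_mem_iff (0 : Fin (m + 1)))
  rw [span_potts_two_eq_invariantFunctions 0]
  simp only [Nat.card_fun, Nat.card_fin, pow_succ] at h
  simp only [add_tsub_cancel_right]
  omega

end
end
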